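/- Let K be a convex body in ℝⁿ. The function x ↦ V((K-x)*), defined for x in the interior of K, is a strictly convex function of x. -/

import Mathlib

open MeasureTheory Set Real
open scoped RealInnerProductSpace ENNReal Pointwise

def polarBody {n : ℕ} (K : Set (EuclideanSpace ℝ (Fin n))) : Set (EuclideanSpace ℝ (Fin n)) :=
  {x | ∀ k ∈ K, (inner ℝ x k : ℝ) ≤ 1}

namespace PolarAux

variable {n : ℕ}

/-- support function of `K` -/
noncomputable def hSup (K : Set (EuclideanSpace ℝ (Fin n))) (y : EuclideanSpace ℝ (Fin n)) : ℝ :=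
  sSup ((fun k => ⟪y, k⟫) '' K)

variable {K : Set (EuclideanSpace ℝ (Fin n))}

lemma bddAbove_image (hK : IsCompact K) (y : EuclideanSpace ℝ (Fin n)) :
    BddAbove ((fun k => ⟪y, k⟫) '' K) :=
  (hK.image (continuous_const.inner continuous_id)).bddAbove

lemma hSup_le_iff (hK : IsCompact K) (hne : K.Nonempty) {y : EuclideanSpace ℝ (Fin n)} {c : ℝ} :
    hSup K y ≤ c ↔ ∀ k ∈ K, ⟪y, k⟫ ≤ c := by
  rw [hSup, csSup_le_iff (bddAbove_image hK y) (hne.image _)]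
  simp

lemma le_hSup (hK : IsCompact K) {k : EuclideanSpace ℝ (Fin n)} (hk : k ∈ K)
    (y : EuclideanSpace ℝ (Fin n)) : ⟪y, k⟫ ≤ hSup K y :=
  le_csSup (bddAbove_image hK y) (mem_image_of_mem _ hk)

lemma continuous_hSup (hK : IsCompact K) (hne : K.Nonempty) : Continuous (hSup K) := by
  obtain ⟨R, hR⟩ := isBounded_iff_forall_norm_le.1 hK.isBounded
  have hR0 : 0 ≤ R := le_trans (norm_nonneg _) (hR _ hne.some_mem)
  have key : ∀ y z : EuclideanSpace ℝ (Fin n), hSup K y ≤ hSup K z + R * ‖y - z‖ := by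
    intro y z
    rw [hSup, csSup_le_iff (bddAbove_image hK y) (hne.image _)]
    rintro c ⟨k, hk, rfl⟩
    have h1 : ⟪y, k⟫ = ⟪z, k⟫ + ⟪y - z, k⟫ := by rw [inner_sub_left]; ring
    have h2 : ⟪y - z, k⟫ ≤ ‖y - z‖ * ‖k‖ := real_inner_le_norm _ _
    have h3 : ‖y - z‖ * ‖k‖ ≤ R * ‖y - z‖ := by
      rw [mul_comm]
      exact mul_le_mul_of_nonneg_right (hR k hk) (norm_nonneg _)
    have := le_hSup hK hk z
    linarith
  have : LipschitzWith R.toNNReal (hSup K) := by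
    apply LipschitzWith.of_dist_le_mul
    intro y z
    rw [Real.dist_eq, abs_le]
    have k1 := key y z
    have k2 := key z y
    have : ‖z - y‖ = ‖y - z‖ := by rw [← norm_neg]; congr 1; abel
    rw [this] at k2
    rw [dist_eq_norm, Real.coe_toNNReal R hR0]
    constructor <;> linarith
  exact this.continuous


/-- sublevel sets of the support function of `K - x` -/
def Pset (K : Set (EuclideanSpace ℝ (Fin n))) (x : EuclideanSpace ℝ (Fin n)) (s : ℝ) :
    Set (EuclideanSpace ℝ (Fin n)) :=
  {y | ∀ k ∈ K, ⟪y, k⟫ - ⟪y, x⟫ ≤ s}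

/-- support function of `K - x` -/
noncomputable def gfun (K : Set (EuclideanSpace ℝ (Fin n))) (x y : EuclideanSpace ℝ (Fin n)) :
    ℝ := hSup K y - ⟪y, x⟫

lemma gfun_le_iff (hK : IsCompact K) (hne : K.Nonempty)
    {x y : EuclideanSpace ℝ (Fin n)} {s : ℝ} :
    gfun K x y ≤ s ↔ y ∈ Pset K x s := by
  rw [gfun, sub_le_iff_le_add, hSup_le_iff hK hne]
  constructor
  · intro h k hk; linarith [h k hk]
  · intro h k hk; linarith [h k hk]

lemma gfun_nonneg (hK : IsCompact K) {x : EuclideanSpace ℝ (Fin n)} (hx : x ∈ K)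
    (y : EuclideanSpace ℝ (Fin n)) : 0 ≤ gfun K x y :=
  sub_nonneg.2 (le_hSup hK hx y)

lemma continuous_gfun (hK : IsCompact K) (hne : K.Nonempty)
    (x : EuclideanSpace ℝ (Fin n)) : Continuous (gfun K x) :=
  (continuous_hSup hK hne).sub (continuous_id.inner continuous_const)

lemma Pset_smul {x : EuclideanSpace ℝ (Fin n)} {s : ℝ} (hs : 0 < s) :
    Pset K x s = s • Pset K x 1 := by
  ext y
  rw [mem_smul_set_iff_inv_smul_mem₀ hs.ne']
  constructor
  · intro h k hk
    have := h k hk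
    rw [real_inner_smul_left, real_inner_smul_left]
    rw [← mul_le_mul_iff_right₀ hs]
    have hss : s * (s⁻¹ * ⟪y, k⟫ - s⁻¹ * ⟪y, x⟫) = ⟪y, k⟫ - ⟪y, x⟫ := by
      field_simp
    rw [hss, mul_one]
    exact this
  · intro h k hk
    have := h k hk
    rw [real_inner_smul_left, real_inner_smul_left] at this
    have h2 : s⁻¹ * ⟪y, k⟫ - s⁻¹ * ⟪y, x⟫ ≤ 1 := this
    have h3 : s * (s⁻¹ * ⟪y, k⟫ - s⁻¹ * ⟪y, x⟫) ≤ s * 1 :=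
      mul_le_mul_of_nonneg_left h2 hs.le
    have h4 : s * (s⁻¹ * ⟪y, k⟫ - s⁻¹ * ⟪y, x⟫) = ⟪y, k⟫ - ⟪y, x⟫ := by field_simp
    linarith [h3, h4.symm.trans_le h3]

lemma isClosed_Pset {x : EuclideanSpace ℝ (Fin n)} {s : ℝ} : IsClosed (Pset K x s) := by
  have : Pset K x s = ⋂ k ∈ K, {y : EuclideanSpace ℝ (Fin n) | ⟪y, k⟫ - ⟪y, x⟫ ≤ s} := by
    ext y; simp [Pset]
  rw [this]
  exact isClosed_biInter fun k _ =>
    isClosed_le ((continuous_id.inner continuous_const).sub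
      (continuous_id.inner continuous_const)) continuous_const

lemma polar_eq (x : EuclideanSpace ℝ (Fin n)) :
    polarBody ((fun k => k - x) '' K) = Pset K x 1 := by
  ext y
  simp only [polarBody, Pset, mem_setOf_eq, forall_mem_image, inner_sub_right]

lemma Pset_subset_closedBall {x : EuclideanSpace ℝ (Fin n)} {ε : ℝ} (hε : 0 < ε)
    (hball : Metric.ball x ε ⊆ K) :
    Pset K x 1 ⊆ Metric.closedBall 0 (2 / ε) := by
  intro y hy
  rcases eq_or_ne y 0 with rfl | hy0
  · simp [Metric.mem_closedBall]; positivity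
  · have hny : 0 < ‖y‖ := norm_pos_iff.2 hy0
    set k : EuclideanSpace ℝ (Fin n) := x + (ε / 2 * ‖y‖⁻¹) • y with hk
    have hkK : k ∈ K := by
      apply hball
      rw [Metric.mem_ball, dist_eq_norm, hk]
      have : x + (ε / 2 * ‖y‖⁻¹) • y - x = (ε / 2 * ‖y‖⁻¹) • y := by abel
      rw [this, norm_smul]
      have : ‖(ε / 2 * ‖y‖⁻¹ : ℝ)‖ = ε / 2 * ‖y‖⁻¹ := by
        rw [Real.norm_eq_abs, abs_of_pos]; positivity
      rw [this]
      have : ε / 2 * ‖y‖⁻¹ * ‖y‖ = ε / 2 := by field_simp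
      rw [this]; linarith
    have := hy k hkK
    rw [hk, inner_add_right, real_inner_smul_right, real_inner_self_eq_norm_mul_norm] at this
    have h2 : ε / 2 * ‖y‖⁻¹ * (‖y‖ * ‖y‖) = ε / 2 * ‖y‖ := by field_simp
    rw [Metric.mem_closedBall, dist_zero_right]
    have h3 : ε / 2 * ‖y‖ ≤ 1 := by rw [← h2]; linarith
    rw [le_div_iff₀ hε]
    nlinarith

lemma aux_exp_tail {a : ℝ} (ha : 0 ≤ a) :
    ∫⁻ t in Ioi (0:ℝ), (Ici a).indicator (fun t => ENNReal.ofReal (exp (-t))) t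
      = ENNReal.ofReal (exp (-a)) := by
  rw [lintegral_indicator measurableSet_Ici, Measure.restrict_restrict measurableSet_Ici]
  have hset : (Ici a ∩ Ioi 0 : Set ℝ) =ᵐ[volume] Ioi a := by
    rw [Filter.eventuallyEq_set]
    filter_upwards [compl_mem_ae_iff.2 (measure_singleton a)] with t ht
    simp only [mem_compl_iff, mem_singleton_iff] at ht
    simp only [mem_inter_iff, mem_Ici, mem_Ioi]
    constructor
    · rintro ⟨h1, _⟩
      exact lt_of_le_of_ne h1 (Ne.symm ht)
    · intro h
      exact ⟨h.le, lt_of_le_of_lt ha h⟩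
  rw [setLIntegral_congr hset]
  have hi : IntegrableOn (fun t : ℝ => exp (-t)) (Ioi a) := by
    have := exp_neg_integrableOn_Ioi a zero_lt_one
    simpa using this
  rw [← ofReal_integral_eq_lintegral_ofReal hi (ae_of_all _ fun t => (exp_pos _).le),
    integral_exp_neg_Ioi]

lemma lintegral_exp_factorial :
    ∫⁻ t in Ioi (0:ℝ), ENNReal.ofReal (exp (-t) * t ^ n) = ENNReal.ofReal (Nat.factorial n : ℝ) := by
  have h0 : (0:ℝ) < (n:ℝ) + 1 := by positivity
  have hint := Real.GammaIntegral_convergent h0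
  have hnn : 0 ≤ᵐ[volume.restrict (Ioi (0:ℝ))]
      fun x : ℝ => exp (-x) * x ^ ((n:ℝ) + 1 - 1) := by
    rw [Filter.EventuallyLE, ae_restrict_iff' measurableSet_Ioi]
    refine ae_of_all _ fun x hx => ?_
    have : (0:ℝ) < x := hx
    positivity
  have key := ofReal_integral_eq_lintegral_ofReal hint hnn
  rw [← Real.Gamma_eq_integral h0] at key
  have hfact : Real.Gamma ((n:ℝ) + 1) = (Nat.factorial n : ℝ) := by
    exact_mod_cast Real.Gamma_nat_eq_factorial n
  rw [hfact] at key
  rw [key]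
  apply setLIntegral_congr_fun measurableSet_Ioi
  intro x hx
  have hx0 : (0:ℝ) < x := hx
  dsimp only
  congr 1
  rw [add_sub_cancel_right, Real.rpow_natCast]

lemma lintegral_exp_gfun (hK : IsCompact K) {x : EuclideanSpace ℝ (Fin n)}
    (hx : x ∈ interior K) :
    ∫⁻ y, ENNReal.ofReal (exp (-(gfun K x y)))
      = ENNReal.ofReal (Nat.factorial n : ℝ) * volume (Pset K x 1) := by
  have hxK : x ∈ K := interior_subset hx
  have hne : K.Nonempty := ⟨x, hxK⟩
  have hg : Continuous (gfun K x) := continuous_gfun hK hne x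
  -- Step A: pointwise layer representation
  have stepA : ∀ y : EuclideanSpace ℝ (Fin n),
      ENNReal.ofReal (exp (-(gfun K x y)))
        = ∫⁻ t in Ioi (0:ℝ),
            (Ici (gfun K x y)).indicator (fun t => ENNReal.ofReal (exp (-t))) t :=
    fun y => (aux_exp_tail (gfun_nonneg hK hxK y)).symm
  simp_rw [stepA]
  -- Step B: Tonelli
  have hmeas : Measurable fun p : EuclideanSpace ℝ (Fin n) × ℝ =>
      ({p : EuclideanSpace ℝ (Fin n) × ℝ | gfun K x p.1 ≤ p.2}).indicator
        (fun p => ENNReal.ofReal (exp (-p.2))) p := by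
    apply Measurable.indicator
    · exact (ENNReal.measurable_ofReal.comp
        ((Real.measurable_exp).comp measurable_snd.neg))
    · exact measurableSet_le (hg.measurable.comp measurable_fst) measurable_snd
  have huncurry : (Function.uncurry fun y t =>
      (Ici (gfun K x y)).indicator (fun t => ENNReal.ofReal (exp (-t))) t)
      = fun p : EuclideanSpace ℝ (Fin n) × ℝ =>
        ({p : EuclideanSpace ℝ (Fin n) × ℝ | gfun K x p.1 ≤ p.2}).indicator
          (fun p => ENNReal.ofReal (exp (-p.2))) p := by
    funext p
    simp only [Function.uncurry, Set.indicator_apply, mem_Ici, mem_setOf_eq]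
  rw [lintegral_lintegral_swap (by rw [huncurry]; exact hmeas.aemeasurable)]
  -- Step C: compute inner integral for fixed t > 0
  have stepC : ∀ t ∈ Ioi (0:ℝ),
      (∫⁻ y, (Ici (gfun K x y)).indicator (fun s => ENNReal.ofReal (exp (-s))) t)
        = ENNReal.ofReal (exp (-t)) * (ENNReal.ofReal (t ^ n) * volume (Pset K x 1)) := by
    intro t ht
    have ht0 : (0:ℝ) < t := ht
    have heq : (fun y => (Ici (gfun K x y)).indicator
        (fun s => ENNReal.ofReal (exp (-s))) t)
        = (Pset K x t).indicator (fun _ => ENNReal.ofReal (exp (-t))) := by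
      funext y
      by_cases h : gfun K x y ≤ t
      · rw [Set.indicator_of_mem (mem_Ici.2 h), Set.indicator_of_mem ((gfun_le_iff hK hne).1 h)]
      · rw [Set.indicator_of_notMem (fun hmem => h (mem_Ici.1 hmem)),
          Set.indicator_of_notMem (fun hmem => h ((gfun_le_iff hK hne).2 hmem))]
    rw [heq, lintegral_indicator isClosed_Pset.measurableSet, setLIntegral_const]
    rw [Pset_smul ht0, Measure.addHaar_smul_of_nonneg volume ht0.le,
      finrank_euclideanSpace_fin]
  rw [setLIntegral_congr_fun measurableSet_Ioi stepC]
  -- Step D+E: pull out the constant and compute the Gamma integral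
  have : ∀ t : ℝ, ENNReal.ofReal (exp (-t)) * (ENNReal.ofReal (t ^ n) * volume (Pset K x 1))
      = ENNReal.ofReal (exp (-t)) * ENNReal.ofReal (t ^ n) * volume (Pset K x 1) := by
    intro t; ring
  simp_rw [this]
  have hfm : Measurable fun t : ℝ => ENNReal.ofReal (exp (-t)) * ENNReal.ofReal (t ^ n) := by
    refine Measurable.mul (f := fun t : ℝ => ENNReal.ofReal (exp (-t)))
      (g := fun t : ℝ => ENNReal.ofReal (t ^ n)) ?_ ?_
    · exact ENNReal.measurable_ofReal.comp (Real.measurable_exp.comp measurable_neg)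
    · exact ENNReal.measurable_ofReal.comp (measurable_id.pow_const n)
  rw [lintegral_mul_const _ hfm]
  congr 1
  rw [← lintegral_exp_factorial]
  apply setLIntegral_congr_fun measurableSet_Ioi
  intro t ht
  dsimp only
  rw [ENNReal.ofReal_mul (exp_pos _).le]

lemma volume_Pset_lt_top {x : EuclideanSpace ℝ (Fin n)} (hx : x ∈ interior K) :
    volume (Pset K x 1) < ⊤ := by
  obtain ⟨ε, hε, hball⟩ := Metric.isOpen_iff.1 isOpen_interior x hx
  calc volume (Pset K x 1) ≤ volume (Metric.closedBall 0 (2 / ε)) :=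
        measure_mono (Pset_subset_closedBall hε (hball.trans interior_subset))
    _ < ⊤ := measure_closedBall_lt_top

lemma integrable_exp_gfun (hK : IsCompact K) {x : EuclideanSpace ℝ (Fin n)}
    (hx : x ∈ interior K) : Integrable (fun y => exp (-(gfun K x y))) := by
  have hne : K.Nonempty := ⟨x, interior_subset hx⟩
  constructor
  · exact ((continuous_gfun hK hne x).neg.rexp).aestronglyMeasurable
  · rw [hasFiniteIntegral_iff_ofReal (ae_of_all _ fun y => (exp_pos _).le)]
    rw [lintegral_exp_gfun hK hx]
    exact ENNReal.mul_lt_top ENNReal.ofReal_lt_top (volume_Pset_lt_top hx)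

lemma toReal_volume_eq (hK : IsCompact K) {x : EuclideanSpace ℝ (Fin n)}
    (hx : x ∈ interior K) :
    (volume (polarBody ((fun k => k - x) '' K))).toReal
      = (∫ y, exp (-(gfun K x y))) / (Nat.factorial n : ℝ) := by
  rw [polar_eq]
  have h2 : ENNReal.ofReal (∫ y, exp (-(gfun K x y)))
      = ENNReal.ofReal (Nat.factorial n : ℝ) * volume (Pset K x 1) := by
    rw [ofReal_integral_eq_lintegral_ofReal (integrable_exp_gfun hK hx)
      (ae_of_all _ fun y => (exp_pos _).le), lintegral_exp_gfun hK hx]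
  have h3 := congrArg ENNReal.toReal h2
  rw [ENNReal.toReal_ofReal (integral_nonneg fun y => (exp_pos _).le),
    ENNReal.toReal_mul, ENNReal.toReal_ofReal (by positivity)] at h3
  have hfac : (0:ℝ) < (Nat.factorial n : ℝ) := by positivity
  rw [eq_div_iff hfac.ne']
  linarith [h3]

lemma strictConvexOn_integral (hK : IsCompact K) (hconv : Convex ℝ K) :
    StrictConvexOn ℝ (interior K) (fun x => ∫ y, exp (-(gfun K x y))) := by
  refine ⟨hconv.interior, ?_⟩
  intro a ha b hb hab p q hp hq hpq
  set c := p • a + q • b with hcdef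
  have hcin : c ∈ interior K := hconv.interior ha hb hp.le hq.le hpq
  have hFa := integrable_exp_gfun hK ha
  have hFb := integrable_exp_gfun hK hb
  have hFc := integrable_exp_gfun hK hcin
  have hcomb : ∀ y : EuclideanSpace ℝ (Fin n),
      -(gfun K c y) = p * (-(gfun K a y)) + q * (-(gfun K b y)) := by
    intro y
    simp only [gfun, hcdef, inner_add_right, real_inner_smul_right]
    have : p * hSup K y + q * hSup K y = hSup K y := by
      rw [← add_mul, hpq, one_mul]
    nlinarith [this]
  have hle : ∀ y : EuclideanSpace ℝ (Fin n),
      exp (-(gfun K c y)) ≤ p * exp (-(gfun K a y)) + q * exp (-(gfun K b y)) := by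
    intro y
    rw [hcomb y]
    simpa using convexOn_exp.2 (mem_univ (-(gfun K a y))) (mem_univ (-(gfun K b y)))
      hp.le hq.le hpq
  have hlt : ∀ y : EuclideanSpace ℝ (Fin n), ⟪y, a - b⟫ ≠ 0 →
      exp (-(gfun K c y)) < p * exp (-(gfun K a y)) + q * exp (-(gfun K b y)) := by
    intro y hy
    have hne' : -(gfun K a y) ≠ -(gfun K b y) := by
      intro h
      apply hy
      have : ⟪y, a⟫ = ⟪y, b⟫ := by
        simp only [gfun, neg_sub] at h
        linarith
      rw [inner_sub_right, this, sub_self]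
    rw [hcomb y]
    simpa using strictConvexOn_exp.2 (mem_univ (-(gfun K a y))) (mem_univ (-(gfun K b y)))
      hne' hp hq hpq
  -- the difference function
  set D : EuclideanSpace ℝ (Fin n) → ℝ := fun y =>
    p * exp (-(gfun K a y)) + q * exp (-(gfun K b y)) - exp (-(gfun K c y)) with hD
  have hDint : Integrable D := ((hFa.const_mul p).add (hFb.const_mul q)).sub hFc
  have hDnn : 0 ≤ D := fun y => sub_nonneg.2 (hle y)
  have hDpos : 0 < ∫ y, D y := by
    rw [integral_pos_iff_support_of_nonneg hDnn hDint]
    set v := a - b with hv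
    have hv0 : v ≠ 0 := sub_ne_zero.2 hab
    have hball : Metric.ball v ‖v‖ ⊆ Function.support D := by
      intro y hy
      have h1 : ⟪y, v⟫ ≠ 0 := by
        have h2 : ⟪y, v⟫ = ⟪v, v⟫ + ⟪y - v, v⟫ := by
          rw [← inner_add_left]; congr 1; abel
        have h3 : |⟪y - v, v⟫| ≤ ‖y - v‖ * ‖v‖ := abs_real_inner_le_norm _ _
        have h4 : ‖y - v‖ < ‖v‖ := by rwa [Metric.mem_ball, dist_eq_norm] at hy
        have h5 : ⟪v, v⟫ = ‖v‖ * ‖v‖ := real_inner_self_eq_norm_mul_norm v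
        have h6 : 0 < ‖v‖ := norm_pos_iff.2 hv0
        have h7 : ‖y - v‖ * ‖v‖ < ‖v‖ * ‖v‖ := by nlinarith
        have := abs_le.1 h3
        intro h0
        rw [h0] at h2
        nlinarith
      have := hlt y h1
      simp only [Function.mem_support, hD]
      intro h0
      have : D y = 0 := h0
      simp only [hD] at this
      linarith
    calc (0:ℝ≥0∞) < volume (Metric.ball v ‖v‖) :=
          Metric.measure_ball_pos volume v (norm_pos_iff.2 hv0)
      _ ≤ volume (Function.support D) := measure_mono hball
  have hadd : Integrable (fun y => p * exp (-(gfun K a y)) + q * exp (-(gfun K b y))) :=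
    (hFa.const_mul p).add (hFb.const_mul q)
  have h1 : ∫ y, D y = (∫ y, (p * exp (-(gfun K a y)) + q * exp (-(gfun K b y))))
      - ∫ y, exp (-(gfun K c y)) := integral_sub hadd hFc
  have h2 : (∫ y, (p * exp (-(gfun K a y)) + q * exp (-(gfun K b y))))
      = p * (∫ y, exp (-(gfun K a y))) + q * (∫ y, exp (-(gfun K b y))) := by
    rw [integral_add (hFa.const_mul p) (hFb.const_mul q), integral_const_mul,
      integral_const_mul]
  have hint : ∫ y, D y = p * (∫ y, exp (-(gfun K a y))) + q * (∫ y, exp (-(gfun K b y)))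
      - ∫ y, exp (-(gfun K c y)) := by rw [h1, h2]
  simp only [smul_eq_mul]
  rw [hint] at hDpos
  linarith [hDpos]

end PolarAux

theorem volume_polar_translate_strictConvexOn {n : ℕ}
    (K : Set (EuclideanSpace ℝ (Fin n)))
    (hKcomp : IsCompact K) (hKconv : Convex ℝ K) (hKint : (interior K).Nonempty) :
    StrictConvexOn ℝ (interior K)
      (fun x => (volume (polarBody ((fun k => k - x) '' K))).toReal) := by
  refine ⟨hKconv.interior, ?_⟩
  intro a ha b hb hab p q hp hq hpq
  have hc : p • a + q • b ∈ interior K := hKconv.interior ha hb hp.le hq.le hpq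
  have h := (PolarAux.strictConvexOn_integral hKcomp hKconv).2 ha hb hab hp hq hpq
  simp only [smul_eq_mul] at h ⊢
  rw [PolarAux.toReal_volume_eq hKcomp ha, PolarAux.toReal_volume_eq hKcomp hb,
    PolarAux.toReal_volume_eq hKcomp hc]
  have hfac : (0:ℝ) < (Nat.factorial n : ℝ) := by positivity
  have hX : p * ((∫ y, Real.exp (-(PolarAux.gfun K a y))) / (Nat.factorial n : ℝ))
      + q * ((∫ y, Real.exp (-(PolarAux.gfun K b y))) / (Nat.factorial n : ℝ))
      = (p * (∫ y, Real.exp (-(PolarAux.gfun K a y)))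
        + q * (∫ y, Real.exp (-(PolarAux.gfun K b y)))) / (Nat.factorial n : ℝ) := by
    ring
  rw [hX]
  exact div_lt_div_of_pos_right h hfac
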